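/- arXiv:2504.10234 — 3 statements merged into one kernel-verified Lean document; each statement's English description precedes it below -/
import Mathlib

section
/- Let A be a unary NFA over {a} whose state set consists of an accepting initial state q0 together with k pairwise disjoint deterministic a-cycles C_1, …, C_k (each state of a cycle has exactly one outgoing a-transition, staying in its cycle), with exactly one a-transition from q0 into each cycle C_i, and with an arbitrary subset of the cycle states accepting. Let B be the NFA obtained from A by adding three new states t1, t2, t3 and the transitions (q0, a, t1), (q0, a, t2), (t2, a, t2), (t2, a, t3), where t1 and t3 are accepting and have no outgoing transitions. Then B accepts every word a^n (n ≥ 0), B is (k+1)-ambiguous, and the following are equivalent: (i) L(A) = {a^n : n ≥ 0} (A is universal); (ii) B is positively resolvable; (iii) B is 1/k-resolvable. -/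
open scoped BigOperators

/-- A nondeterministic finite automaton over alphabet `σ` with states `Q`:
an initial state, a finite set of transitions and a finite set of accepting states. -/
structure NFA' (σ Q : Type) where
  init : Q
  trans : Finset (Q × σ × Q)
  accept : Finset Q

namespace NFA'

variable {σ Q : Type}

/-- `IsRun Δ p w ts r`: `ts` is a run on the word `w` from state `p` to state `r`,
using transitions from `Δ`. -/
inductive IsRun (Δ : Finset (Q × σ × Q)) : Q → List σ → List (Q × σ × Q) → Q → Prop
  | nil (q : Q) : IsRun Δ q [] [] q
  | cons {p : Q} {a : σ} {q r : Q} {w : List σ} {ts : List (Q × σ × Q)} :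
      (p, a, q) ∈ Δ → IsRun Δ q w ts r → IsRun Δ p (a :: w) ((p, a, q) :: ts) r

/-- `ts` is an accepting run of `A` on `w`. -/
def AccRun (A : NFA' σ Q) (w : List σ) (ts : List (Q × σ × Q)) : Prop :=
  ∃ r ∈ A.accept, IsRun A.trans A.init w ts r

/-- The language of `A`: words admitting an accepting run. -/
def lang (A : NFA' σ Q) : Set (List σ) := {w | ∃ ts, A.AccRun w ts}

/-- `δ(q, u)`: the set of states reachable from `q` by a run on `u`. -/
def reach (A : NFA' σ Q) (q : Q) (u : List σ) : Set Q :=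
  {r | ∃ ts, IsRun A.trans q u ts r}

/-- The word `u` admits an accepting run from the state `q`. -/
def AccFrom (A : NFA' σ Q) (q : Q) (u : List σ) : Prop :=
  ∃ r ∈ A.accept, ∃ ts, IsRun A.trans q u ts r

/-- `A_S`: the automaton `A` with transitions restricted to `S`. -/
def restrict (A : NFA' σ Q) (S : Finset (Q × σ × Q)) : NFA' σ Q :=
  { A with trans := S }

/-- `A` is `k`-ambiguous: every word has at most `k` accepting runs. -/
def kAmbiguous (A : NFA' σ Q) (k : ℕ) : Prop :=
  ∀ w, {ts | A.AccRun w ts}.encard ≤ (k : ℕ∞)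

/-- `A` is finitely-ambiguous. -/
def FinitelyAmbiguous (A : NFA' σ Q) : Prop := ∃ k : ℕ, 0 < k ∧ A.kAmbiguous k

/-- A memoryless stochastic resolver for `A`: probabilities, supported on the transitions
of `A`, summing to one over the outgoing transitions of every pair `(p, a)` that has at
least one outgoing transition (implicitly, `A` is completed with a non-accepting sink). -/
structure Resolver (A : NFA' σ Q) where
  r : Q × σ × Q → ℝ
  nonneg : ∀ t, 0 ≤ r t
  le_one : ∀ t, r t ≤ 1
  supp : ∀ t, r t ≠ 0 → t ∈ A.trans
  sum_one : ∀ p a, (∃ q, (p, a, q) ∈ A.trans) →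
      ∑ t ∈ A.trans, {t : Q × σ × Q | t.1 = p ∧ t.2.1 = a}.indicator r t = 1

/-- The probability of a run: the product of the probabilities of its transitions. -/
def runProb (f : Q × σ × Q → ℝ) (ts : List (Q × σ × Q)) : ℝ := (ts.map f).prod

/-- The acceptance probability of a word: the sum, over all accepting runs, of the
product of the transition probabilities along the run. -/
noncomputable def accProb (A : NFA' σ Q) (f : Q × σ × Q → ℝ) (w : List σ) : ℝ :=
  ∑ᶠ ts ∈ {ts | A.AccRun w ts}, runProb f ts

/-- `A` is `λ`-memoryless-stochastically-resolvable. -/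
def Resolvable (A : NFA' σ Q) (lam : ℝ) : Prop :=
  ∃ R : A.Resolver, {w | lam ≤ A.accProb R.r w} = A.lang

/-- `A` is positively (memoryless stochastically) resolvable. -/
def PositivelyResolvable (A : NFA' σ Q) : Prop :=
  ∃ lam : ℝ, 0 < lam ∧ A.Resolvable lam

/-- The support `S` is bad: no resolver whose support is exactly `S` witnesses
positive resolvability. -/
def BadSupport (A : NFA' σ Q) (S : Finset (Q × σ × Q)) : Prop :=
  ∀ R : A.Resolver, (∀ t, R.r t ≠ 0 ↔ t ∈ S) →
    ∀ lam : ℝ, 0 < lam → {w | lam ≤ A.accProb R.r w} ≠ A.lang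

/-- A transition is nondeterministic in `S`. -/
def NondetIn (S : Finset (Q × σ × Q)) (t : Q × σ × Q) : Prop :=
  t ∈ S ∧ ∃ q', q' ≠ t.2.2 ∧ (t.1, t.2.1, q') ∈ S

/-- The number of transitions of a run that are nondeterministic in `S`. -/
noncomputable def nondetCount (S : Finset (Q × σ × Q)) (ts : List (Q × σ × Q)) : ℕ :=
  (ts.map (Set.indicator {t | NondetIn S t} (fun _ => 1))).sum

/-- `b(w)`: the minimal number of `S`-nondeterministic transitions over all accepting
runs of `w` in `A_S`. -/
noncomputable def minNondet (A : NFA' σ Q) (S : Finset (Q × σ × Q)) (w : List σ) : ℕ :=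
  sInf {m | ∃ ts, (A.restrict S).AccRun w ts ∧ nondetCount S ts = m}

/-- The state of a run `ts` (started in `q0`) after `n` transitions. -/
def stateAt (q0 : Q) (ts : List (Q × σ × Q)) (n : ℕ) : Q :=
  match (ts.take n).getLast? with
  | some t => t.2.2
  | none => q0

/-- `Θ` makes `A` into a probabilistic finite automaton (PFA) based on `A`. -/
def IsPFA (A : NFA' σ Q) (Θ : Q × σ × Q → ℝ) : Prop :=
  (∀ t ∈ A.trans, 0 < Θ t ∧ Θ t ≤ 1) ∧ (∀ t, t ∉ A.trans → Θ t = 0) ∧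
  ∀ p a, (∃ q, (p, a, q) ∈ A.trans) →
    ∑ t ∈ A.trans, {t : Q × σ × Q | t.1 = p ∧ t.2.1 = a}.indicator Θ t = 1

/-- The PFA is simple: every transition has probability `1/2` or `1`. -/
def IsSimple (A : NFA' σ Q) (Θ : Q × σ × Q → ℝ) : Prop :=
  ∀ t ∈ A.trans, Θ t = 1/2 ∨ Θ t = 1

end NFA'

open NFA'

/-- The NFA `B` obtained from the unary NFA `A` by adding three new states
`t1, t2, t3` (= `inr 0, inr 1, inr 2`) with transitions `(q0,a,t1)`, `(q0,a,t2)`,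
`(t2,a,t2)`, `(t2,a,t3)`, where `t1` and `t3` are accepting with no outgoing
transitions. -/
def buildB {Q : Type} [DecidableEq Q] (A : NFA' Unit Q) : NFA' Unit (Q ⊕ Fin 3) where
  init := Sum.inl A.init
  trans :=
    (A.trans.image (fun t => (Sum.inl t.1, (), Sum.inl t.2.2))) ∪
      {(Sum.inl A.init, (), Sum.inr 0), (Sum.inl A.init, (), Sum.inr 1),
       (Sum.inr 1, (), Sum.inr 1), (Sum.inr 1, (), Sum.inr 2)}
  accept := (A.accept.image Sum.inl) ∪ {Sum.inr 0, Sum.inr 2}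

/-!
An accepting run of `B` on `aⁿ` either enters a cycle of `A`, where it is deterministic, or is
the unique accepting run through `t1` or `t2`; hence `B` has at most `k + 1` accepting runs.

If `A` is universal, the resolver that is uniform on the transitions of `A` and never leaves
the loop at `t2` gives every `aⁿ` an accepting run of probability at least `1/k` through some
cycle. Conversely, the cycles make `L(A)` periodic, so if `A` rejects one word it rejects
arbitrarily long ones. Only the run through `t2` accepts those, with probability at most
`xᵐ y`, where `x + y = 1` are the probabilities of the loop and of the exit at `t2`; this tends
to `0`.
-/

open scoped Finset

theorem Relation.ReflTransGen.exists_iterate_eq {α : Type*} {r : α → α → Prop} {P : Set α}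
    {f : α → α} {a b : α} (h : Relation.ReflTransGen r a b) (hP : Set.MapsTo f P P)
    (hdet : ∀ a ∈ P, ∀ b, r a b → b = f a) (ha : a ∈ P) : ∃ n, f^[n] a = b := by
  suffices ∃ n, f^[n] a = b ∧ b ∈ P from this.imp fun _ => And.left
  induction h with
  | refl => exact ⟨0, rfl, ha⟩
  | tail _ hbc ih =>
    obtain ⟨n, rfl, hb⟩ := ih
    refine ⟨n + 1, ?_, ?_⟩
    · rw [Function.iterate_succ_apply', hdet _ hb _ hbc]
    · exact hdet _ hb _ hbc ▸ hP hb

theorem exists_pow_mul_lt {x y c : ℝ} (hc : 0 < c) (hx : 0 ≤ x) (hy : 0 ≤ y)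
    (hxy : x + y = 1) : ∃ N, ∀ M ≥ N, x ^ M * y < c := by
  rcases (show x ≤ 1 by linarith).lt_or_eq with hx1 | rfl
  · obtain ⟨N, hN⟩ := exists_pow_lt_of_lt_one hc hx1
    refine ⟨N, fun M hM => ?_⟩
    calc x ^ M * y ≤ x ^ M := mul_le_of_le_one_right (pow_nonneg hx M) (by linarith)
      _ ≤ x ^ N := pow_le_pow_of_le_one hx hx1.le hM
      _ < c := hN
  · exact ⟨0, fun M _ => by simpa [show y = 0 by linarith] using hc⟩

namespace NFA'

open Sum

section Runs

variable {σ Q : Type}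

theorem isRun_nil_iff {Δ : Finset (Q × σ × Q)} {q r : Q} {ts : List (Q × σ × Q)} :
    IsRun Δ q [] ts r ↔ ts = [] ∧ r = q := by
  constructor
  · rintro ⟨⟩
    exact ⟨rfl, rfl⟩
  · rintro ⟨rfl, rfl⟩
    exact .nil _

theorem isRun_cons_iff {Δ : Finset (Q × σ × Q)} {p r : Q} {a : σ} {w : List σ}
    {ts : List (Q × σ × Q)} :
    IsRun Δ p (a :: w) ts r ↔
      ∃ q ts', (p, a, q) ∈ Δ ∧ IsRun Δ q w ts' r ∧ ts = (p, a, q) :: ts' := by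
  constructor
  · rintro (_ | ⟨hmem, hrun⟩)
    exact ⟨_, _, hmem, hrun, rfl⟩
  · rintro ⟨q, ts', hmem, hrun, rfl⟩
    exact .cons hmem hrun

theorem runProb_cons (g : Q × σ × Q → ℝ) (t : Q × σ × Q) (ts : List (Q × σ × Q)) :
    runProb g (t :: ts) = g t * runProb g ts :=
  List.prod_cons

theorem runProb_nonneg {g : Q × σ × Q → ℝ} (hg : ∀ t, 0 ≤ g t) (ts : List (Q × σ × Q)) :
    0 ≤ runProb g ts :=
  List.prod_nonneg fun _ hx => by
    obtain ⟨t, -, rfl⟩ := List.mem_map.1 hx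
    exact hg t

theorem runProb_le_accProb (A : NFA' σ Q) {g : Q × σ × Q → ℝ} (hg : ∀ t, 0 ≤ g t)
    {w : List σ} (hfin : {ts | A.AccRun w ts}.Finite) {ts : List (Q × σ × Q)}
    (hts : A.AccRun w ts) : runProb g ts ≤ A.accProb g w := by
  rw [accProb, finsum_mem_eq_finite_toFinset_sum _ hfin]
  exact Finset.single_le_sum (fun ts _ => runProb_nonneg hg ts) (hfin.mem_toFinset.2 hts)

theorem accProb_eq_runProb_of_eq_singleton (A : NFA' σ Q) (g : Q × σ × Q → ℝ)
    {w : List σ} {ts : List (Q × σ × Q)} (h : {ts | A.AccRun w ts} = {ts}) :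
    A.accProb g w = runProb g ts := by
  rw [accProb, h, finsum_mem_singleton]

theorem Resolver.sum_filter_eq_one [DecidableEq Q] [DecidableEq σ] {A : NFA' σ Q}
    (R : A.Resolver) {p : Q} {a : σ} (h : ∃ q, (p, a, q) ∈ A.trans) :
    ∑ t ∈ A.trans with t.1 = p ∧ t.2.1 = a, R.r t = 1 := by
  rw [← R.sum_one p a h, Finset.sum_filter]
  exact Finset.sum_congr rfl fun t _ => by simp [Set.indicator_apply]

end Runs

section Uniform

variable {σ Q : Type} [DecidableEq Q] [DecidableEq σ]

noncomputable def uniformOn (S : Finset (Q × σ × Q)) (t : Q × σ × Q) : ℝ :=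
  if t ∈ S then (#{s ∈ S | s.1 = t.1 ∧ s.2.1 = t.2.1} : ℝ)⁻¹ else 0

theorem uniformOn_of_mem {S : Finset (Q × σ × Q)} {t : Q × σ × Q} (ht : t ∈ S) :
    uniformOn S t = (#{s ∈ S | s.1 = t.1 ∧ s.2.1 = t.2.1} : ℝ)⁻¹ :=
  if_pos ht

noncomputable def Resolver.uniform (A : NFA' σ Q) (S : Finset (Q × σ × Q)) (hS : S ⊆ A.trans)
    (hcover : ∀ p a, (∃ q, (p, a, q) ∈ A.trans) → ∃ q, (p, a, q) ∈ S) : A.Resolver where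
  r := uniformOn S
  nonneg t := by
    unfold uniformOn
    split_ifs
    exacts [inv_nonneg.2 (Nat.cast_nonneg _), le_rfl]
  le_one t := by
    unfold uniformOn
    split_ifs with ht
    · exact inv_le_one_of_one_le₀ (Nat.one_le_cast.2 (Finset.card_pos.2 ⟨t, by simp [ht]⟩))
    · exact zero_le_one
  supp t ht := by
    by_contra hnot
    exact ht (if_neg fun h => hnot (hS h) : uniformOn S t = 0)
  sum_one p a h := by
    obtain ⟨q, hq⟩ := hcover p a h
    have hpos : 0 < #{s ∈ S | s.1 = p ∧ s.2.1 = a} :=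
      Finset.card_pos.2 ⟨(p, a, q), by simp [hq]⟩
    rw [Finset.sum_indicator_eq_sum_filter]
    calc ∑ t ∈ A.trans with t ∈ {t : Q × σ × Q | t.1 = p ∧ t.2.1 = a}, uniformOn S t
        = ∑ t ∈ S with t.1 = p ∧ t.2.1 = a, uniformOn S t := by
          refine (Finset.sum_subset (Finset.filter_subset_filter _ hS)
            fun t _ ht => if_neg fun htS => ht ?_).symm
          simp_all
      _ = ∑ t ∈ S with t.1 = p ∧ t.2.1 = a, (#{s ∈ S | s.1 = p ∧ s.2.1 = a} : ℝ)⁻¹ :=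
          Finset.sum_congr rfl fun t ht => by
            obtain ⟨htS, rfl, rfl⟩ := Finset.mem_filter.1 ht
            exact uniformOn_of_mem htS
      _ = 1 := by
          rw [Finset.sum_const, nsmul_eq_mul]
          exact mul_inv_cancel₀ (Nat.cast_ne_zero.2 hpos.ne')

end Uniform

section Unary

variable {Q : Type} {Δ : Finset (Q × Unit × Q)} {P : Set Q} {f : Q → Q}

theorem eq_replicate_length (w : List Unit) : w = List.replicate w.length () :=
  List.eq_replicate_of_mem fun _ _ => rfl

def iterRun (f : Q → Q) : Q → ℕ → List (Q × Unit × Q)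
  | _, 0 => []
  | q, n + 1 => (q, (), f q) :: iterRun f (f q) n

theorem isRun_iterRun (hP : Set.MapsTo f P P) (hΔ : ∀ q ∈ P, (q, (), f q) ∈ Δ) (n : ℕ)
    {q : Q} (hq : q ∈ P) : IsRun Δ q (List.replicate n ()) (iterRun f q n) (f^[n] q) := by
  induction n generalizing q with
  | zero => exact .nil q
  | succ n ih => exact .cons (hΔ q hq) (ih (hP hq))

theorem IsRun.eq_iterRun (hP : Set.MapsTo f P P)
    (hdet : ∀ q ∈ P, ∀ r, (q, (), r) ∈ Δ → r = f q) {n : ℕ} {q r : Q}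
    {ts : List (Q × Unit × Q)} (h : IsRun Δ q (List.replicate n ()) ts r) (hq : q ∈ P) :
    ts = iterRun f q n ∧ r = f^[n] q := by
  induction n generalizing q ts with
  | zero => exact isRun_nil_iff.1 h
  | succ n ih =>
    obtain ⟨q', ts', hmem, htail, rfl⟩ := isRun_cons_iff.1 h
    obtain rfl := hdet q hq q' hmem
    obtain ⟨rfl, rfl⟩ := ih htail (hP hq)
    exact ⟨rfl, rfl⟩

theorem runProb_iterRun {g : Q × Unit × Q → ℝ} (hP : Set.MapsTo f P P)
    (hg : ∀ q ∈ P, g (q, (), f q) = 1) (n : ℕ) {q : Q} (hq : q ∈ P) :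
    runProb g (iterRun f q n) = 1 := by
  induction n generalizing q with
  | zero => rfl
  | succ n ih => rw [iterRun, runProb_cons, hg q hq, ih (hP hq), one_mul]

end Unary

section SpecialRun

variable {Q : Type} (A : NFA' Unit Q)

/-- The accepting runs of `B` through `t1` or `t2`, and the empty run. -/
def specialRun : ℕ → List ((Q ⊕ Fin 3) × Unit × (Q ⊕ Fin 3))
  | 0 => []
  | 1 => [(inl A.init, (), inr 0)]
  | m + 2 =>
    (inl A.init, (), inr 1) :: (List.replicate m (inr 1, (), inr 1) ++ [(inr 1, (), inr 2)])

theorem runProb_specialRun (g : (Q ⊕ Fin 3) × Unit × (Q ⊕ Fin 3) → ℝ) (m : ℕ) :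
    runProb g (specialRun A (m + 2)) =
      g (inl A.init, (), inr 1) * g (inr 1, (), inr 1) ^ m * g (inr 1, (), inr 2) := by
  simp [specialRun, runProb, List.prod_replicate, mul_assoc]

end SpecialRun

section BuildB

variable {Q : Type} [DecidableEq Q] (A : NFA' Unit Q)

@[simp]
theorem buildB_init : (buildB A).init = inl A.init := rfl

@[simp]
theorem inl_inl_mem_buildB_trans {p q : Q} :
    (inl p, (), inl q) ∈ (buildB A).trans ↔ (p, (), q) ∈ A.trans := by
  simp [buildB, Unique.exists_iff]

@[simp]
theorem inl_inr_mem_buildB_trans {p : Q} {j : Fin 3} :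
    (inl p, (), inr j) ∈ (buildB A).trans ↔ p = A.init ∧ (j = 0 ∨ j = 1) := by
  simp [buildB]
  tauto

@[simp]
theorem inr_mem_buildB_trans {j : Fin 3} {x : Q ⊕ Fin 3} :
    (inr j, (), x) ∈ (buildB A).trans ↔ j = 1 ∧ (x = inr 1 ∨ x = inr 2) := by
  simp [buildB]
  tauto

@[simp]
theorem inl_mem_buildB_accept {q : Q} : inl q ∈ (buildB A).accept ↔ q ∈ A.accept := by
  simp [buildB]

@[simp]
theorem inr_mem_buildB_accept {j : Fin 3} : inr j ∈ (buildB A).accept ↔ j = 0 ∨ j = 2 := by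
  simp [buildB]

theorem isRun_buildB_loop_exit (m : ℕ) :
    IsRun (buildB A).trans (inr 1) (List.replicate (m + 1) ())
      (List.replicate m (inr 1, (), inr 1) ++ [(inr 1, (), inr 2)]) (inr 2) := by
  induction m with
  | zero => exact .cons (by simp) (.nil _)
  | succ m ih => exact .cons (by simp) ih

theorem accRun_specialRun (hq0acc : A.init ∈ A.accept) (n : ℕ) :
    (buildB A).AccRun (List.replicate n ()) (specialRun A n) := by
  match n with
  | 0 => exact ⟨inl A.init, by simpa using hq0acc, .nil _⟩
  | 1 => exact ⟨inr 0, by simp, .cons (by simp) (.nil _)⟩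
  | m + 2 => exact ⟨inr 2, by simp, .cons (by simp) (isRun_buildB_loop_exit A m)⟩

theorem buildB_lang_eq_univ (hq0acc : A.init ∈ A.accept) : (buildB A).lang = Set.univ :=
  Set.eq_univ_of_forall fun w => by
    rw [eq_replicate_length w]
    exact ⟨_, accRun_specialRun A hq0acc _⟩

variable {A}

theorem IsRun.buildB_dead {j : Fin 3} (hj : j ≠ 1) {n : ℕ} {ts r}
    (h : IsRun (buildB A).trans (inr j) (List.replicate n ()) ts r) : n = 0 ∧ ts = [] := by
  cases n with
  | zero => exact ⟨rfl, (isRun_nil_iff.1 h).1⟩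
  | succ n =>
    obtain ⟨q, -, hmem, -⟩ := isRun_cons_iff.1 h
    exact absurd ((inr_mem_buildB_trans A).1 hmem).1 hj

theorem IsRun.buildB_loop_exit {n : ℕ} {ts r}
    (h : IsRun (buildB A).trans (inr 1) (List.replicate n ()) ts r)
    (hr : r ∈ (buildB A).accept) :
    ∃ m, n = m + 1 ∧ ts = List.replicate m (inr 1, (), inr 1) ++ [(inr 1, (), inr 2)] := by
  induction n generalizing ts with
  | zero =>
    obtain ⟨-, rfl⟩ := isRun_nil_iff.1 h
    simp at hr
  | succ n ih =>
    obtain ⟨q, ts', hmem, htail, rfl⟩ := isRun_cons_iff.1 h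
    obtain ⟨-, rfl | rfl⟩ := (inr_mem_buildB_trans A).1 hmem
    · obtain ⟨m, rfl, rfl⟩ := ih htail
      exact ⟨m + 1, rfl, rfl⟩
    · obtain ⟨rfl, rfl⟩ := htail.buildB_dead (by decide)
      exact ⟨0, rfl, rfl⟩

theorem Resolver.loop_add_exit (R : (buildB A).Resolver) :
    R.r (inr 1, (), inr 1) + R.r (inr 1, (), inr 2) = 1 := by
  have hfilter : {t ∈ (buildB A).trans | t.1 = inr 1 ∧ t.2.1 = ()} =
      {(inr 1, (), inr 1), (inr 1, (), inr 2)} := by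
    ext ⟨x, ⟨⟩, y⟩
    rcases x with _ | _
    · simp
    · simp
      tauto
  rw [← R.sum_filter_eq_one (p := inr 1) (a := ()) ⟨inr 1, by simp⟩, hfilter,
    Finset.sum_pair (by simp)]

variable (A)

def buildBSupport : Finset ((Q ⊕ Fin 3) × Unit × (Q ⊕ Fin 3)) :=
  A.trans.image (fun s => (inl s.1, (), inl s.2.2)) ∪ {(inr 1, (), inr 1)}

@[simp]
theorem inl_inl_mem_buildBSupport {p q : Q} :
    (inl p, (), inl q) ∈ buildBSupport A ↔ (p, (), q) ∈ A.trans := by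
  simp [buildBSupport, Unique.exists_iff]

@[simp]
theorem inl_inr_not_mem_buildBSupport {p : Q} {j : Fin 3} :
    (inl p, (), inr j) ∉ buildBSupport A := by
  simp [buildBSupport]

@[simp]
theorem inr_mem_buildBSupport {j : Fin 3} {x : Q ⊕ Fin 3} :
    (inr j, (), x) ∈ buildBSupport A ↔ j = 1 ∧ x = inr 1 := by
  simp [buildBSupport]

theorem buildBSupport_subset : buildBSupport A ⊆ (buildB A).trans := by
  rintro ⟨_ | _, ⟨⟩, _ | _⟩ <;> simp_all

theorem exists_mem_buildBSupport (h0 : ∃ q, (A.init, (), q) ∈ A.trans) (p : Q ⊕ Fin 3)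
    (a : Unit) (h : ∃ q, (p, a, q) ∈ (buildB A).trans) : ∃ q, (p, a, q) ∈ buildBSupport A := by
  obtain ⟨q, hq⟩ := h
  obtain ⟨⟩ := a
  rcases p with p | j <;> rcases q with q | i
  · exact ⟨inl q, by simpa using hq⟩
  · obtain ⟨rfl, -⟩ := (inl_inr_mem_buildB_trans A).1 hq
    obtain ⟨q, hq⟩ := h0
    exact ⟨inl q, by simpa using hq⟩
  · simp at hq
  · exact ⟨inr 1, by simpa using ((inr_mem_buildB_trans A).1 hq).1⟩

noncomputable def buildBResolver (h0 : ∃ q, (A.init, (), q) ∈ A.trans) :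
    (buildB A).Resolver :=
  Resolver.uniform _ _ (buildBSupport_subset A) (exists_mem_buildBSupport A h0)

theorem buildBResolver_r (h0 : ∃ q, (A.init, (), q) ∈ A.trans) :
    (buildBResolver A h0).r = uniformOn (buildBSupport A) :=
  rfl

end BuildB

/-- An abstraction of the shape of `A`: its initial state `q0` moves to the states `entry i`,
and on `cyc` the automaton is deterministic with transition function `succ`, for which every
entry state is periodic. -/
structure StarOfCycles {Q : Type} (A : NFA' Unit Q) (k : ℕ) where
  cyc : Set Q
  succ : Q → Q
  entry : Fin k → Q
  init_not_mem : A.init ∉ cyc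
  mapsTo_succ : Set.MapsTo succ cyc cyc
  succ_mem_trans : ∀ q ∈ cyc, (q, (), succ q) ∈ A.trans
  eq_succ_of_mem_trans : ∀ q ∈ cyc, ∀ r, (q, (), r) ∈ A.trans → r = succ q
  entry_mem : ∀ i, entry i ∈ cyc
  entry_mem_trans : ∀ i, (A.init, (), entry i) ∈ A.trans
  exists_entry_eq : ∀ q, (A.init, (), q) ∈ A.trans → ∃ i, q = entry i
  entry_mem_periodicPts : ∀ i, entry i ∈ Function.periodicPts succ

namespace StarOfCycles

section Automaton

variable {Q : Type} {A : NFA' Unit Q} {k : ℕ}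

theorem nonempty_of_cycles (C : Fin k → Finset Q) (hq0notin : ∀ i, A.init ∉ C i)
    (hdet : ∀ i, ∀ q ∈ C i, ∃ q' ∈ C i, (q, (), q') ∈ A.trans ∧
      ∀ r, (q, (), r) ∈ A.trans → r = q')
    (hconn : ∀ i, ∀ q ∈ C i, ∀ q' ∈ C i,
      Relation.ReflTransGen (fun p r => (p, (), r) ∈ A.trans) q q')
    (hinto : ∀ i, ∃ q ∈ C i, (A.init, (), q) ∈ A.trans ∧
      ∀ q' ∈ C i, (A.init, (), q') ∈ A.trans → q' = q)
    (htrans : ∀ t ∈ A.trans,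
      (t.1 = A.init ∧ ∃ i, t.2.2 ∈ C i) ∨ (∃ i, t.1 ∈ C i ∧ t.2.2 ∈ C i)) :
    Nonempty (StarOfCycles A k) := by
  let cyc : Set Q := {q | ∃ i, q ∈ C i}
  have hsucc : ∀ q, ∃ q', ∀ i, q ∈ C i → q' ∈ C i ∧ (q, (), q') ∈ A.trans ∧
      ∀ r, (q, (), r) ∈ A.trans → r = q' := fun q => by
    by_cases hq : q ∈ cyc
    · obtain ⟨i, hi⟩ := hq
      obtain ⟨q', -, htr, huniq⟩ := hdet i q hi
      refine ⟨q', fun j hj => ⟨?_, htr, huniq⟩⟩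
      obtain ⟨q'', hq'', htr', -⟩ := hdet j q hj
      exact huniq q'' htr' ▸ hq''
    · exact ⟨q, fun i hi => absurd ⟨i, hi⟩ hq⟩
  choose succ hsucc using hsucc
  choose entry hentry hentry_trans hentry_uniq using hinto
  have hmaps : Set.MapsTo succ cyc cyc := fun q ⟨i, hi⟩ => ⟨i, (hsucc q i hi).1⟩
  have hdet' : ∀ q ∈ cyc, ∀ r, (q, (), r) ∈ A.trans → r = succ q :=
    fun q ⟨i, hi⟩ => (hsucc q i hi).2.2
  refine ⟨{ cyc, succ, entry
            init_not_mem := fun ⟨i, hi⟩ => hq0notin i hi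
            mapsTo_succ := hmaps
            succ_mem_trans := fun q ⟨i, hi⟩ => (hsucc q i hi).2.1
            eq_succ_of_mem_trans := hdet'
            entry_mem := fun i => ⟨i, hentry i⟩
            entry_mem_trans := hentry_trans
            exists_entry_eq := fun q hq => ?_
            entry_mem_periodicPts := fun i => ?_ }⟩
  · obtain ⟨-, i, hi⟩ | ⟨i, hi, -⟩ := htrans _ hq
    · exact ⟨i, hentry_uniq i q hi hq⟩
    · exact absurd hi (hq0notin i)
  · have hsucc_mem := (hsucc _ i (hentry i)).1
    obtain ⟨n, hn⟩ := (hconn i _ hsucc_mem _ (hentry i)).exists_iterate_eq hmaps hdet'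
      ⟨i, hsucc_mem⟩
    exact Function.mem_periodicPts.2 ⟨n + 1, n.succ_pos, hn⟩

theorem replicate_succ_mem_lang_iff (S : StarOfCycles A k) (m : ℕ) :
    List.replicate (m + 1) () ∈ A.lang ↔ ∃ i, S.succ^[m] (S.entry i) ∈ A.accept := by
  constructor
  · rintro ⟨_, r, hr, hrun⟩
    rw [List.replicate_succ] at hrun
    obtain ⟨q, ts, hq, htail, -⟩ := isRun_cons_iff.1 hrun
    obtain ⟨i, rfl⟩ := S.exists_entry_eq q hq
    obtain ⟨-, rfl⟩ := htail.eq_iterRun S.mapsTo_succ S.eq_succ_of_mem_trans (S.entry_mem i)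
    exact ⟨i, hr⟩
  · rintro ⟨i, hi⟩
    exact ⟨_, _, hi, .cons (S.entry_mem_trans i)
      (isRun_iterRun S.mapsTo_succ S.succ_mem_trans m (S.entry_mem i))⟩

theorem exists_period (S : StarOfCycles A k) :
    ∃ L, 0 < L ∧ ∀ i m t, S.succ^[m + t * L] (S.entry i) = S.succ^[m] (S.entry i) := by
  refine ⟨∏ i, Function.minimalPeriod S.succ (S.entry i), Finset.prod_pos fun i _ =>
    Function.minimalPeriod_pos_of_mem_periodicPts (S.entry_mem_periodicPts i), fun i m t => ?_⟩
  have hper : Function.IsPeriodicPt S.succ (∏ i, Function.minimalPeriod S.succ (S.entry i))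
      (S.entry i) :=
    Function.isPeriodicPt_iff_minimalPeriod_dvd.2 (Finset.dvd_prod_of_mem _ (Finset.mem_univ i))
  rw [Function.iterate_add_apply, (hper.const_mul t).eq]

theorem exists_not_mem_lang_ge (S : StarOfCycles A k) (hq0acc : A.init ∈ A.accept) {n : ℕ}
    (hrej : List.replicate n () ∉ A.lang) (N : ℕ) :
    ∃ M ≥ N, List.replicate (M + 2) () ∉ A.lang := by
  obtain ⟨L, hL, hper⟩ := S.exists_period
  obtain ⟨m, rfl⟩ : ∃ m, n = m + 1 := by
    refine Nat.exists_eq_succ_of_ne_zero fun hn => hrej ?_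
    subst hn
    exact ⟨[], A.init, hq0acc, .nil _⟩
  have hNL : N + 1 ≤ (N + 1) * L := Nat.le_mul_of_pos_right _ hL
  refine ⟨m + (N + 1) * L - 1, by omega, ?_⟩
  rw [show m + (N + 1) * L - 1 + 2 = m + (N + 1) * L + 1 by omega,
    S.replicate_succ_mem_lang_iff]
  simpa only [hper, S.replicate_succ_mem_lang_iff] using hrej

theorem mapsTo_map_succ (S : StarOfCycles A k) :
    Set.MapsTo (Sum.map S.succ id) (inl '' S.cyc) (inl '' S.cyc : Set (Q ⊕ Fin 3)) := by
  rintro _ ⟨q, hq, rfl⟩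
  exact ⟨S.succ q, S.mapsTo_succ hq, rfl⟩

theorem map_succ_iterate_inl (S : StarOfCycles A k) (m : ℕ) (q : Q) :
    (Sum.map S.succ id)^[m] (inl q : Q ⊕ Fin 3) = inl (S.succ^[m] q) :=
  (Function.Semiconj.iterate_right (f := inl) (gb := Sum.map S.succ id) (fun _ => rfl) m q).symm

/-- The run of `B` on `aⁿ` through the `i`-th cycle (for `n = 0`, the empty run). -/
def cycRun (S : StarOfCycles A k) (i : Fin k) : ℕ → List ((Q ⊕ Fin 3) × Unit × (Q ⊕ Fin 3))
  | 0 => []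
  | m + 1 =>
    (inl A.init, (), inl (S.entry i)) :: iterRun (Sum.map S.succ id) (inl (S.entry i)) m

end Automaton

section Extension

variable {Q : Type} [DecidableEq Q] {A : NFA' Unit Q} {k : ℕ}

theorem map_succ_mem_buildB_trans (S : StarOfCycles A k) :
    ∀ x ∈ (inl '' S.cyc : Set (Q ⊕ Fin 3)), (x, (), Sum.map S.succ id x) ∈ (buildB A).trans := by
  rintro _ ⟨q, hq, rfl⟩
  simpa using S.succ_mem_trans q hq

theorem eq_map_succ_of_mem_buildB_trans (S : StarOfCycles A k) :
    ∀ x ∈ (inl '' S.cyc : Set (Q ⊕ Fin 3)), ∀ y, (x, (), y) ∈ (buildB A).trans →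
      y = Sum.map S.succ id x := by
  rintro _ ⟨q, hq, rfl⟩ (y | j) hy
  · simpa using S.eq_succ_of_mem_trans q hq y (by simpa using hy)
  · obtain ⟨rfl, -⟩ := (inl_inr_mem_buildB_trans A).1 hy
    exact absurd hq S.init_not_mem

theorem accRun_cycRun (S : StarOfCycles A k) {i : Fin k} {m : ℕ}
    (hi : S.succ^[m] (S.entry i) ∈ A.accept) :
    (buildB A).AccRun (List.replicate (m + 1) ()) (S.cycRun i (m + 1)) := by
  refine ⟨_, ?_, .cons (by simpa using S.entry_mem_trans i)
    (isRun_iterRun S.mapsTo_map_succ S.map_succ_mem_buildB_trans m ⟨_, S.entry_mem i, rfl⟩)⟩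
  simpa [map_succ_iterate_inl] using hi

theorem accRun_buildB (S : StarOfCycles A k) {n : ℕ} {ts}
    (h : (buildB A).AccRun (List.replicate n ()) ts) :
    ts = specialRun A n ∨ (List.replicate n () ∈ A.lang ∧ ∃ i, ts = S.cycRun i n) := by
  obtain ⟨r, hr, hrun⟩ := h
  cases n with
  | zero => exact .inl (isRun_nil_iff.1 hrun).1
  | succ m =>
    rw [List.replicate_succ] at hrun
    obtain ⟨x, ts', hx, htail, rfl⟩ := isRun_cons_iff.1 hrun
    rcases x with q | j
    · obtain ⟨i, rfl⟩ := S.exists_entry_eq q (by simpa using hx)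
      obtain ⟨rfl, rfl⟩ := htail.eq_iterRun S.mapsTo_map_succ S.eq_map_succ_of_mem_buildB_trans
        ⟨_, S.entry_mem i, rfl⟩
      rw [map_succ_iterate_inl, inl_mem_buildB_accept] at hr
      exact .inr ⟨(S.replicate_succ_mem_lang_iff m).2 ⟨i, hr⟩, i, rfl⟩
    · obtain ⟨-, rfl | rfl⟩ := (inl_inr_mem_buildB_trans A).1 hx
      · obtain ⟨rfl, rfl⟩ := htail.buildB_dead (by decide)
        exact .inl rfl
      · obtain ⟨m, rfl, rfl⟩ := htail.buildB_loop_exit hr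
        exact .inl rfl

theorem kAmbiguous_buildB (S : StarOfCycles A k) : (buildB A).kAmbiguous (k + 1) := by
  intro w
  rw [eq_replicate_length w]
  set n := w.length
  have hsub : {ts | (buildB A).AccRun (List.replicate n ()) ts} ⊆
      ↑(insert (specialRun A n) (Finset.univ.image fun i => S.cycRun i n)) := by
    intro ts hts
    rcases S.accRun_buildB hts with h | ⟨-, i, h⟩ <;> simp [h]
  refine (Set.encard_mono hsub).trans ?_
  rw [Set.encard_coe_eq_coe_finsetCard, Nat.cast_le]
  refine (Finset.card_insert_le _ _).trans (Nat.add_le_add_right ?_ 1)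
  exact Finset.card_image_le.trans (Finset.card_fin k).le

theorem accProb_buildB_of_not_mem_lang (S : StarOfCycles A k) (hq0acc : A.init ∈ A.accept)
    {n : ℕ} (hrej : List.replicate n () ∉ A.lang) (g : (Q ⊕ Fin 3) × Unit × (Q ⊕ Fin 3) → ℝ) :
    (buildB A).accProb g (List.replicate n ()) = runProb g (specialRun A n) := by
  refine accProb_eq_runProb_of_eq_singleton _ g (Set.eq_singleton_iff_unique_mem.2
    ⟨accRun_specialRun A hq0acc n, fun ts hts => ?_⟩)
  exact (S.accRun_buildB hts).resolve_right fun h => hrej h.1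

theorem filter_buildBSupport_of_mem_cyc (S : StarOfCycles A k) {q : Q} (hq : q ∈ S.cyc) :
    {t ∈ buildBSupport A | t.1 = inl q ∧ t.2.1 = ()} = {(inl q, (), inl (S.succ q))} := by
  ext ⟨x, ⟨⟩, y⟩
  rcases x with p | j <;> rcases y with r | j' <;> simp
  constructor
  · rintro ⟨hr, rfl⟩
    exact ⟨rfl, S.eq_succ_of_mem_trans p hq r hr⟩
  · rintro ⟨rfl, rfl⟩
    exact ⟨S.succ_mem_trans p hq, rfl⟩

theorem card_filter_buildBSupport_init_le (S : StarOfCycles A k) :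
    #{t ∈ buildBSupport A | t.1 = inl A.init ∧ t.2.1 = ()} ≤ k := by
  calc #{t ∈ buildBSupport A | t.1 = inl A.init ∧ t.2.1 = ()}
      ≤ #(Finset.univ.image fun i =>
          ((inl A.init, (), inl (S.entry i)) : (Q ⊕ Fin 3) × Unit × (Q ⊕ Fin 3))) := by
        refine Finset.card_le_card ?_
        rintro ⟨_ | _, ⟨⟩, _ | _⟩ ht <;> simp at ht ⊢
        obtain ⟨hq, rfl⟩ := ht
        obtain ⟨i, rfl⟩ := S.exists_entry_eq _ hq
        exact ⟨rfl, i, rfl⟩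
    _ ≤ k := Finset.card_image_le.trans (Finset.card_fin k).le

theorem inv_le_runProb_cycRun (S : StarOfCycles A k) (h0 : ∃ q, (A.init, (), q) ∈ A.trans)
    (i : Fin k) (m : ℕ) : (k : ℝ)⁻¹ ≤ runProb (buildBResolver A h0).r (S.cycRun i (m + 1)) := by
  have hentry : (inl A.init, (), inl (S.entry i)) ∈ buildBSupport A := by
    simpa using S.entry_mem_trans i
  rw [cycRun, runProb_cons, runProb_iterRun S.mapsTo_map_succ ?_ m ⟨_, S.entry_mem i, rfl⟩,
    mul_one]
  · rw [buildBResolver_r, uniformOn_of_mem hentry]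
    dsimp only
    refine inv_anti₀ ?_ (Nat.cast_le.2 S.card_filter_buildBSupport_init_le)
    exact Nat.cast_pos.2 (Finset.card_pos.2 ⟨_, Finset.mem_filter.2 ⟨hentry, rfl, rfl⟩⟩)
  · rintro _ ⟨q, hq, rfl⟩
    have hmem : (inl q, (), inl (S.succ q)) ∈ buildBSupport A := by
      simpa using S.succ_mem_trans q hq
    rw [buildBResolver_r, Sum.map_inl, uniformOn_of_mem hmem]
    dsimp only
    rw [S.filter_buildBSupport_of_mem_cyc hq, Finset.card_singleton, Nat.cast_one, inv_one]

theorem resolvable_buildB (S : StarOfCycles A k) (hk : 0 < k) (hq0acc : A.init ∈ A.accept)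
    (huniv : ∀ n, List.replicate n () ∈ A.lang) : (buildB A).Resolvable (1 / k) := by
  let R := buildBResolver A ⟨S.entry ⟨0, hk⟩, S.entry_mem_trans _⟩
  have hfin (n : ℕ) : {ts | (buildB A).AccRun (List.replicate n ()) ts}.Finite :=
    Set.finite_of_encard_le_coe (S.kAmbiguous_buildB _)
  refine ⟨R, (buildB_lang_eq_univ A hq0acc).symm ▸ Set.eq_univ_of_forall fun w => ?_⟩
  rw [Set.mem_ofPred_eq, eq_replicate_length w, one_div]
  cases w.length with
  | zero =>
    calc (k : ℝ)⁻¹ ≤ runProb R.r (specialRun A 0) := inv_le_one_of_one_le₀ (Nat.one_le_cast.2 hk)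
      _ ≤ _ := runProb_le_accProb _ R.nonneg (hfin 0) (accRun_specialRun A hq0acc 0)
  | succ m =>
    obtain ⟨i, hi⟩ := (S.replicate_succ_mem_lang_iff m).1 (huniv (m + 1))
    exact (S.inv_le_runProb_cycRun _ i m).trans
      (runProb_le_accProb _ R.nonneg (hfin _) (S.accRun_cycRun hi))

theorem universal_of_positivelyResolvable (S : StarOfCycles A k) (hq0acc : A.init ∈ A.accept)
    (h : (buildB A).PositivelyResolvable) (n : ℕ) : List.replicate n () ∈ A.lang := by
  obtain ⟨c, hc, R, hR⟩ := h
  rw [buildB_lang_eq_univ A hq0acc, Set.eq_univ_iff_forall] at hR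
  by_contra hrej
  obtain ⟨N, hN⟩ := exists_pow_mul_lt hc (R.nonneg _) (R.nonneg _) R.loop_add_exit
  obtain ⟨M, hM, hrejM⟩ := S.exists_not_mem_lang_ge hq0acc hrej N
  have hc_le := hR (List.replicate (M + 2) ())
  rw [Set.mem_ofPred_eq, S.accProb_buildB_of_not_mem_lang hq0acc hrejM, runProb_specialRun,
    mul_assoc] at hc_le
  have hle : R.r (inl A.init, (), inr 1) * (R.r (inr 1, (), inr 1) ^ M * R.r (inr 1, (), inr 2))
      ≤ R.r (inr 1, (), inr 1) ^ M * R.r (inr 1, (), inr 2) :=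
    mul_le_of_le_one_left (mul_nonneg (pow_nonneg (R.nonneg _) M) (R.nonneg _)) (R.le_one _)
  linarith [hN M hM]

end Extension

end StarOfCycles

end NFA'

theorem stmt12_general {Q : Type} [DecidableEq Q] (A : NFA' Unit Q) (k : ℕ) (hk : 0 < k)
    (C : Fin k → Finset Q)
    (hq0notin : ∀ i, A.init ∉ C i)
    -- the initial state is accepting
    (hq0acc : A.init ∈ A.accept)
    -- each cycle state has exactly one outgoing transition, staying in its cycle
    (hdet : ∀ i, ∀ q ∈ C i, ∃ q' ∈ C i, (q, (), q') ∈ A.trans ∧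
      ∀ r, (q, (), r) ∈ A.trans → r = q')
    -- each cycle is a single cycle (strongly connected)
    (hconn : ∀ i, ∀ q ∈ C i, ∀ q' ∈ C i,
      Relation.ReflTransGen (fun p r => (p, (), r) ∈ A.trans) q q')
    -- exactly one transition from `q0` into each cycle
    (hinto : ∀ i, ∃ q ∈ C i, (A.init, (), q) ∈ A.trans ∧
      ∀ q' ∈ C i, (A.init, (), q') ∈ A.trans → q' = q)
    -- all transitions go from `q0` into a cycle or stay inside a cycle
    (htrans : ∀ t ∈ A.trans,
      (t.1 = A.init ∧ ∃ i, t.2.2 ∈ C i) ∨ (∃ i, t.1 ∈ C i ∧ t.2.2 ∈ C i)) :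
    (∀ n : ℕ, List.replicate n () ∈ (buildB A).lang) ∧
    (buildB A).kAmbiguous (k + 1) ∧
    ((∀ n : ℕ, List.replicate n () ∈ A.lang) ↔ (buildB A).PositivelyResolvable) ∧
    ((buildB A).PositivelyResolvable ↔ (buildB A).Resolvable (1 / (k : ℝ))) := by
  obtain ⟨S⟩ := StarOfCycles.nonempty_of_cycles C hq0notin hdet hconn hinto htrans
  have hpos : (0 : ℝ) < 1 / k := one_div_pos.2 (Nat.cast_pos.2 hk)
  have hresolvable := S.resolvable_buildB hk hq0acc
  have huniversal := S.universal_of_positivelyResolvable hq0acc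
  exact ⟨fun n => ⟨_, accRun_specialRun A hq0acc n⟩, S.kAmbiguous_buildB,
    ⟨fun h => ⟨_, hpos, hresolvable h⟩, huniversal⟩,
    ⟨fun h => hresolvable (huniversal h), fun h => ⟨_, hpos, h⟩⟩⟩

/-- For a unary NFA `A` consisting of an accepting initial state `q0` feeding into `k`
pairwise disjoint deterministic cycles, the extended automaton `B` is universal,
`(k+1)`-ambiguous, and: `A` is universal iff `B` is positively resolvable iff `B` is
`1/k`-resolvable. -/
theorem stmt12 {Q : Type} [DecidableEq Q] (A : NFA' Unit Q) (k : ℕ) (hk : 0 < k)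
    (C : Fin k → Finset Q)
    -- the cycles are pairwise disjoint and do not contain the initial state
    (hdisj : ∀ i j, i ≠ j → Disjoint (C i) (C j))
    (hq0notin : ∀ i, A.init ∉ C i)
    -- the initial state is accepting
    (hq0acc : A.init ∈ A.accept)
    -- the state set is `{q0}` together with the cycles
    (hstates : ∀ q : Q, q = A.init ∨ ∃ i, q ∈ C i)
    -- each cycle state has exactly one outgoing transition, staying in its cycle
    (hdet : ∀ i, ∀ q ∈ C i, ∃ q' ∈ C i, (q, (), q') ∈ A.trans ∧
      ∀ r, (q, (), r) ∈ A.trans → r = q')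
    -- each cycle is a single cycle (strongly connected)
    (hconn : ∀ i, ∀ q ∈ C i, ∀ q' ∈ C i,
      Relation.ReflTransGen (fun p r => (p, (), r) ∈ A.trans) q q')
    -- exactly one transition from `q0` into each cycle
    (hinto : ∀ i, ∃ q ∈ C i, (A.init, (), q) ∈ A.trans ∧
      ∀ q' ∈ C i, (A.init, (), q') ∈ A.trans → q' = q)
    -- all transitions go from `q0` into a cycle or stay inside a cycle
    (htrans : ∀ t ∈ A.trans,
      (t.1 = A.init ∧ ∃ i, t.2.2 ∈ C i) ∨ (∃ i, t.1 ∈ C i ∧ t.2.2 ∈ C i)) :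
    (∀ n : ℕ, List.replicate n () ∈ (buildB A).lang) ∧
    (buildB A).kAmbiguous (k + 1) ∧
    ((∀ n : ℕ, List.replicate n () ∈ A.lang) ↔ (buildB A).PositivelyResolvable) ∧
    ((buildB A).PositivelyResolvable ↔ (buildB A).Resolvable (1 / (k : ℝ))) :=
  stmt12_general A k hk C hq0notin hq0acc hdet hconn hinto htrans
end

section
/- Let A be a finitely-ambiguous NFA and let q be a state that is reachable from the initial state q0 and from which some accepting state is reachable (i.e., q ∈ δ(q0, x) for some word x and δ(q, z) ∩ F ≠ ∅ for some word z). Then for every word y there is at most one run from q to q on y: any loop from q to q over y that occurs on an accepting run is the unique run from q to q on y. -/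
open scoped BigOperators

open NFA'

section Aux

variable {σ Q : Type}

lemma isRun_length {Δ : Finset (Q × σ × Q)} {p r : Q} {w : List σ}
    {ts : List (Q × σ × Q)} (h : IsRun Δ p w ts r) : ts.length = w.length := by
  induction h with
  | nil => rfl
  | cons _ _ ih => simpa using ih

lemma isRun_append {Δ : Finset (Q × σ × Q)} {p r s : Q} {u v : List σ}
    {ts ss : List (Q × σ × Q)} (h1 : IsRun Δ p u ts r) (h2 : IsRun Δ r v ss s) :
    IsRun Δ p (u ++ v) (ts ++ ss) s := by
  induction h1 with
  | nil => simpa using h2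
  | cons ht _ ih => exact IsRun.cons ht (ih h2)

lemma isRun_pow {Δ : Finset (Q × σ × Q)} {p : Q} {y : List σ}
    {ts : List (Q × σ × Q)} (h : IsRun Δ p y ts p) (m : ℕ) :
    IsRun Δ p (List.flatten (List.replicate m y)) (List.flatten (List.replicate m ts)) p := by
  induction m with
  | zero => exact IsRun.nil p
  | succ n ih =>
    simpa [List.replicate_succ] using isRun_append h ih

lemma len_flatten_rep (m : ℕ) (l : List (Q × σ × Q)) :
    (List.flatten (List.replicate m l)).length = m * l.length := by
  induction m with
  | zero => simp
  | succ n ih => simp [List.replicate_succ, ih, Nat.succ_mul, Nat.add_comm]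

end Aux

/-- In a finitely-ambiguous NFA, for any state `q` that is reachable from the initial
state and from which an accepting state is reachable, there is at most one run from
`q` back to `q` on any word `y`. -/
theorem stmt13 {σ Q : Type} (A : NFA' σ Q) (hfa : A.FinitelyAmbiguous)
    (q : Q) (hreach : ∃ x, q ∈ A.reach A.init x) (hcoreach : ∃ z, A.AccFrom q z) :
    ∀ (y : List σ) (ts₁ ts₂ : List (Q × σ × Q)),
      IsRun A.trans q y ts₁ q → IsRun A.trans q y ts₂ q → ts₁ = ts₂ := by
  intro y ts₁ ts₂ h1 h2
  by_contra hne
  obtain ⟨x, tsx, hx⟩ := hreach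
  obtain ⟨z, r, hr, tsz, hz⟩ := hcoreach
  obtain ⟨k, -, hamb⟩ := hfa
  have hy : y ≠ [] := by
    rintro rfl
    cases h1; cases h2; exact hne rfl
  set L := y.length with hLdef
  have hL1 : ts₁.length = L := isRun_length h1
  have hL2 : ts₂.length = L := isRun_length h2
  set n := k with hn
  set g : ℕ → List (Q × σ × Q) := fun i =>
    List.flatten (List.replicate i ts₁) ++ List.flatten (List.replicate (n - i) ts₂) with hg
  set w := x ++ (List.flatten (List.replicate n y) ++ z) with hw
  set F : ℕ → List (Q × σ × Q) := fun i => tsx ++ (g i ++ tsz) with hF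
  have hmem : ∀ i < n + 1, A.AccRun w (F i) := by
    intro i hi
    refine ⟨r, hr, ?_⟩
    have hjoin : List.flatten (List.replicate i y) ++ List.flatten (List.replicate (n - i) y)
        = List.flatten (List.replicate n y) := by
      rw [← List.flatten_append, ← List.replicate_add]
      congr 2
      omega
    have hmid : IsRun A.trans q (List.flatten (List.replicate n y)) (g i) q := by
      rw [← hjoin]
      exact isRun_append (isRun_pow h1 i) (isRun_pow h2 (n - i))
    exact isRun_append hx (isRun_append hmid hz)
  have key : ∀ (a : List (Q × σ × Q)) (b : List (Q × σ × Q)) (m : ℕ), 0 < m →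
      a.length = L → (List.flatten (List.replicate m a) ++ b).take L = a := by
    intro a b m hm ha
    obtain ⟨m', rfl⟩ := Nat.exists_eq_succ_of_ne_zero hm.ne'
    rw [List.replicate_succ, List.flatten_cons, List.append_assoc]
    exact List.take_left' ha
  have hginj : ∀ i j, i < j → j < n + 1 → g i ≠ g j := by
    intro i j hij hj h
    have hdi : ((g i).drop (i * L)).take L = ts₂ := by
      have hlen : (List.flatten (List.replicate i ts₁)).length = i * L := by
        rw [len_flatten_rep, hL1]
      rw [hg]
      simp only
      rw [List.drop_left' hlen]
      have := key ts₂ [] (n - i) (by omega) hL2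
      simpa using this
    have hdj : ((g j).drop (i * L)).take L = ts₁ := by
      have hrep : List.replicate j ts₁
          = List.replicate i ts₁ ++ List.replicate (j - i) ts₁ := by
        rw [← List.replicate_add]
        congr 1
        omega
      have hlen : (List.flatten (List.replicate i ts₁)).length = i * L := by
        rw [len_flatten_rep, hL1]
      rw [hg]
      simp only
      rw [hrep, List.flatten_append, List.append_assoc, List.drop_left' hlen]
      exact key ts₁ _ (j - i) (by omega) hL1
    rw [h, hdj] at hdi
    exact hne hdi
  have hinj : Set.InjOn F {i | i < n + 1} := by
    intro i hi j hj hfe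
    by_contra hij
    have hge : g i = g j := by
      have := List.append_cancel_left hfe
      exact List.append_cancel_right this
    rcases Nat.lt_or_ge i j with hlt | hge'
    · exact hginj i j hlt hj hge
    · exact hginj j i (by omega) hi hge.symm
  have hsub : F '' {i | i < n + 1} ⊆ {ts | A.AccRun w ts} := by
    rintro _ ⟨i, hi, rfl⟩
    exact hmem i hi
  have hcard : ((n + 1 : ℕ) : ℕ∞) ≤ {ts | A.AccRun w ts}.encard := by
    calc ((n + 1 : ℕ) : ℕ∞) = ({i | i < n + 1} : Set ℕ).encard :=
          (Set.Nat.encard_range _).symm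
      _ = (F '' {i | i < n + 1}).encard := hinj.encard_image.symm
      _ ≤ _ := Set.encard_le_encard hsub
  have hk2 := le_trans hcard (hamb w)
  have : (n + 1 : ℕ) ≤ n := by exact_mod_cast hk2
  omega
end

section
/- Let A be a finitely-ambiguous NFA, S ⊆ Δ a support, and let w = x·y·z ∈ L(A_S) with y ∈ Σ+ have exactly M accepting runs in A_S. Suppose there exist sets Q', R ⊆ Q such that: (1) Q' = {q ∈ δ_{A_S}(q0, x) : the word yz has an accepting run from q in A_S}, and every accepting run of w in A_S that is in a state q ∈ Q' after reading x is in the same state q again after reading xy; (2) R = {q ∈ δ_{A_S}(q0, x) : yz has no accepting run from q in A_S} and also R = {q ∈ δ_{A_S}(q0, xy) : z has no accepting run from q in A_S}. Then for every j ∈ ℕ, the word x·y^j·z has exactly M accepting runs in A_S. -/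
open scoped BigOperators

/-!
Every accepting run of `x y^j z` in `A_S` passes, after `x`, through a state `q` which by
condition (2) (applied along the `y`-blocks) already accepts `y z`; by condition (1) every
`y`-block of such a run then returns to `q`. Finite ambiguity forces the `y`-loop at `q` to be
unique: two distinct loops would give `2^k` accepting runs of `x y^k z`. Hence the accepting
runs of `x y^j z` correspond bijectively, for every `j`, to the triples (run on `x` to `q`,
loop on `y` at `q`, accepting run on `z` from `q`), and their number does not depend on `j`.
-/

theorem List.eq_of_flatten_map_eq {α β : Type*} {f : α → List β} (hf : Function.Injective f)
    (hlen : ∀ a b, (f a).length = (f b).length) :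
    ∀ {l₁ l₂ : List α}, l₁.length = l₂.length →
      (l₁.map f).flatten = (l₂.map f).flatten → l₁ = l₂
  | [], [], _, _ => rfl
  | a :: l₁, b :: l₂, hl, h => by
    simp only [List.map_cons, List.flatten_cons] at h
    obtain ⟨hab, h'⟩ := List.append_inj h (hlen a b)
    rw [hf hab, List.eq_of_flatten_map_eq hf hlen (by simpa using hl) h']

namespace NFA'

variable {σ Q : Type}

section Runs

variable {Δ Δ' : Finset (Q × σ × Q)} {p q r : Q} {u v w : List σ}
  {ts ts' : List (Q × σ × Q)}

theorem IsRun.length_eq (h : IsRun Δ p w ts r) : ts.length = w.length := by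
  induction h with
  | nil => rfl
  | cons _ _ ih => simp [ih]

theorem IsRun.mono (hΔ : Δ ⊆ Δ') (h : IsRun Δ p w ts r) : IsRun Δ' p w ts r := by
  induction h with
  | nil => exact .nil _
  | cons ht _ ih => exact .cons (hΔ ht) ih

theorem IsRun.append (h : IsRun Δ p u ts q) (h' : IsRun Δ q v ts' r) :
    IsRun Δ p (u ++ v) (ts ++ ts') r := by
  induction h with
  | nil => simpa
  | cons ht _ ih => exact .cons ht (ih h')

theorem IsRun.exists_split (h : IsRun Δ p (u ++ v) ts r) :
    ∃ ts₁ ts₂ q, ts = ts₁ ++ ts₂ ∧ IsRun Δ p u ts₁ q ∧ IsRun Δ q v ts₂ r := by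
  induction u generalizing p ts with
  | nil => exact ⟨[], ts, p, rfl, .nil p, h⟩
  | cons a u ih =>
    cases h with
    | cons ht h' =>
      obtain ⟨ts₁, ts₂, q, rfl, h₁, h₂⟩ := ih h'
      exact ⟨_ :: ts₁, ts₂, q, rfl, .cons ht h₁, h₂⟩

theorem IsRun.eq_nil (h : IsRun Δ p [] ts r) : ts = [] ∧ r = p := by
  cases h
  exact ⟨rfl, rfl⟩

theorem IsRun.target_unique {r' : Q} (h : IsRun Δ p w ts r) (h' : IsRun Δ p w ts r') :
    r = r' := by
  induction h with
  | nil => cases h'; rfl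
  | cons _ _ ih => cases h' with
    | cons _ h'' => exact ih h''

theorem IsRun.flatten_loops {y : List σ} :
    ∀ L : List (List (Q × σ × Q)), (∀ l ∈ L, IsRun Δ q y l q) →
      IsRun Δ q (List.replicate L.length y).flatten L.flatten q
  | [], _ => .nil q
  | l :: L, hL => by
    simpa [List.replicate_succ] using
      (hL l (by simp)).append (flatten_loops L fun l' hl' => hL l' (by simp [hl']))

theorem IsRun.replicate (h : IsRun Δ q w ts q) (j : ℕ) :
    IsRun Δ q (List.replicate j w).flatten (List.replicate j ts).flatten q := by
  simpa using
    IsRun.flatten_loops (List.replicate j ts) fun l hl => List.eq_of_mem_replicate hl ▸ h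

theorem stateAt_cons_succ (q₀ : Q) (t : Q × σ × Q) (ts : List (Q × σ × Q)) (n : ℕ) :
    stateAt q₀ (t :: ts) (n + 1) = stateAt t.2.2 ts n := by
  unfold stateAt
  rw [List.take_succ_cons, List.getLast?_cons]
  cases (ts.take n).getLast? <;> rfl

theorem IsRun.stateAt_append (h : IsRun Δ p u ts q) (ts' : List (Q × σ × Q)) :
    stateAt p (ts ++ ts') u.length = q := by
  induction h with
  | nil => simp [stateAt]
  | cons _ _ ih => rw [List.cons_append, List.length_cons, stateAt_cons_succ, ih]

end Runs

variable {A : NFA' σ Q} {x y z : List σ} {q : Q}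

theorem mem_reach_append {p q' : Q} {u v : List σ} {t : List (Q × σ × Q)}
    (hq : q ∈ A.reach p u) (h : IsRun A.trans q v t q') : q' ∈ A.reach p (u ++ v) :=
  let ⟨tu, htu⟩ := hq
  ⟨tu ++ t, htu.append h⟩

theorem FinitelyAmbiguous.restrict (hA : A.FinitelyAmbiguous) {S : Finset (Q × σ × Q)}
    (hS : S ⊆ A.trans) : (A.restrict S).FinitelyAmbiguous := by
  obtain ⟨k, hk, hamb⟩ := hA
  refine ⟨k, hk, fun w => (Set.encard_le_encard ?_).trans (hamb w)⟩
  rintro ts ⟨r, hr, h⟩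
  exact ⟨r, hr, h.mono hS⟩

/-- Two distinct loops would give `2^k` accepting runs of `u y^k v`. -/
theorem FinitelyAmbiguous.loop_unique (hA : A.FinitelyAmbiguous) {u v : List σ} {r : Q}
    {tu t₁ t₂ tv : List (Q × σ × Q)} (hu : IsRun A.trans A.init u tu q)
    (h₁ : IsRun A.trans q y t₁ q) (h₂ : IsRun A.trans q y t₂ q)
    (hv : IsRun A.trans q v tv r) (hr : r ∈ A.accept) : t₁ = t₂ := by
  by_contra hne
  obtain ⟨k, -, hamb⟩ := hA
  let c : Bool → List (Q × σ × Q) := fun b => bif b then t₁ else t₂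
  have hc : Function.Injective c := by
    intro a b
    cases a <;> cases b <;> simp [c, hne, Ne.symm hne]
  have hclen : ∀ a b, (c a).length = (c b).length := by
    intro a b
    cases a <;> cases b <;> simp [c, h₁.length_eq, h₂.length_eq]
  let g : List.Vector Bool k → List (Q × σ × Q) :=
    fun bs => tu ++ (bs.toList.map c).flatten ++ tv
  have hg : Function.Injective g := fun bs bs' h =>
    List.Vector.toList_injective <| List.eq_of_flatten_map_eq hc hclen (by simp)
      (List.append_cancel_left (List.append_cancel_right h))
  have hrange : Set.range g ⊆ {ts | A.AccRun (u ++ (List.replicate k y).flatten ++ v) ts} := by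
    rintro _ ⟨bs, rfl⟩
    have hloops := IsRun.flatten_loops (bs.toList.map c) (by
      simp only [List.mem_map]
      rintro _ ⟨b, -, rfl⟩
      cases b
      exacts [h₂, h₁])
    rw [List.length_map, List.Vector.toList_length] at hloops
    exact ⟨r, hr, (hu.append hloops).append hv⟩
  have h2k : ((2 ^ k : ℕ) : ℕ∞) ≤ k := calc
    ((2 ^ k : ℕ) : ℕ∞) = ENat.card (List.Vector Bool k) := by
      simp [ENat.card_eq_coe_fintype_card, card_vector]
    _ ≤ (Set.range g).encard := hg.encard_range
    _ ≤ k := (Set.encard_le_encard hrange).trans (hamb _)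
  exact Nat.lt_two_pow_self.not_ge (by exact_mod_cast h2k)

def loopingRuns (A : NFA' σ Q) (x y z : List σ) :
    Set (List (Q × σ × Q) × List (Q × σ × Q) × List (Q × σ × Q)) :=
  {t | ∃ q, ∃ r ∈ A.accept, IsRun A.trans A.init x t.1 q ∧ IsRun A.trans q y t.2.1 q ∧
    IsRun A.trans q z t.2.2 r}

def pump (j : ℕ) (t : List (Q × σ × Q) × List (Q × σ × Q) × List (Q × σ × Q)) :
    List (Q × σ × Q) :=
  t.1 ++ (List.replicate j t.2.1).flatten ++ t.2.2

theorem pump_accRun {t} (ht : t ∈ loopingRuns A x y z) (j : ℕ) :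
    A.AccRun (x ++ (List.replicate j y).flatten ++ z) (pump j t) :=
  let ⟨_, r, hr, hx, hy, hz⟩ := ht
  ⟨r, hr, (hx.append (hy.replicate j)).append hz⟩

theorem injOn_pump (hA : A.FinitelyAmbiguous) (j : ℕ) :
    Set.InjOn (pump j) (loopingRuns A x y z) := by
  rintro ⟨tx, ty, tz⟩ ⟨q, r, hr, htx, hty, htz⟩ ⟨tx', ty', tz'⟩ ⟨q', -, -, htx', hty', -⟩ h
  simp only [pump, List.append_assoc] at h htx htx' hty hty' htz
  obtain ⟨rfl, h'⟩ := List.append_inj h (htx.length_eq.trans htx'.length_eq.symm)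
  obtain rfl := htx.target_unique htx'
  obtain rfl := hA.loop_unique htx hty hty' htz hr
  rw [List.append_cancel_left h']

-- Condition (1), phrased with states instead of positions in runs.
def LoopsOn (A : NFA' σ Q) (x y z : List σ) : Prop :=
  ∀ q q', q ∈ A.reach A.init x → A.AccFrom q (y ++ z) → q' ∈ A.reach q y → A.AccFrom q' z →
    q' = q

theorem loopsOn_of_stateAt
    (hloop : ∀ ts, A.AccRun (x ++ y ++ z) ts →
      stateAt A.init ts x.length ∈ {q | q ∈ A.reach A.init x ∧ A.AccFrom q (y ++ z)} →
      stateAt A.init ts (x.length + y.length) = stateAt A.init ts x.length) :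
    A.LoopsOn x y z := by
  intro q q' hq hyz hq' hz
  obtain ⟨tx, htx⟩ := hq
  obtain ⟨ty, hty⟩ := hq'
  obtain ⟨r, hr, tz, htz⟩ := hz
  have hx : stateAt A.init (tx ++ ty ++ tz) x.length = q := by
    rw [List.append_assoc]
    exact htx.stateAt_append _
  have hxy : stateAt A.init (tx ++ ty ++ tz) (x.length + y.length) = q' := by
    rw [← List.length_append]
    exact (htx.append hty).stateAt_append _
  rw [← hx, ← hxy]
  exact hloop _ ⟨r, hr, (htx.append hty).append htz⟩ (hx ▸ ⟨⟨tx, htx⟩, hyz⟩)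

-- Condition (2), with `R` eliminated.
def DeadStatesAgree (A : NFA' σ Q) (x y z : List σ) : Prop :=
  ∀ q, (q ∈ A.reach A.init x ∧ ¬A.AccFrom q (y ++ z)) ↔
    (q ∈ A.reach A.init (x ++ y) ∧ ¬A.AccFrom q z)

theorem accFrom_append_of_accFrom_pow (hR : A.DeadStatesAgree x y z) (m : ℕ)
    (hq : q ∈ A.reach A.init x) (h : A.AccFrom q ((List.replicate m y).flatten ++ z)) :
    A.AccFrom q (y ++ z) := by
  induction m generalizing q with
  | zero =>
    by_contra hyz
    exact ((hR q).1 ⟨hq, hyz⟩).2 (by simpa using h)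
  | succ m ih =>
    obtain ⟨r, hr, ts, hts⟩ := h
    rw [List.replicate_succ, List.flatten_cons, List.append_assoc] at hts
    obtain ⟨ty, ts', q', rfl, hty, hts'⟩ := hts.exists_split
    have hq'z : A.AccFrom q' z := by
      by_contra hz
      obtain ⟨hq'x, hq'yz⟩ := (hR q').2 ⟨mem_reach_append hq hty, hz⟩
      exact hq'yz (ih hq'x ⟨r, hr, ts', hts'⟩)
    obtain ⟨r', hr', tz, htz⟩ := hq'z
    exact ⟨r', hr', ty ++ tz, hty.append htz⟩

theorem accFrom_of_accFrom_pow (hR : A.DeadStatesAgree x y z) (m : ℕ)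
    (hq : q ∈ A.reach A.init (x ++ y))
    (h : A.AccFrom q ((List.replicate m y).flatten ++ z)) : A.AccFrom q z := by
  by_contra hz
  obtain ⟨hqx, hqyz⟩ := (hR q).2 ⟨hq, hz⟩
  exact hqyz (accFrom_append_of_accFrom_pow hR m hqx h)

theorem exists_loop (hloop : A.LoopsOn x y z) (hq : q ∈ A.reach A.init x)
    (hyz : A.AccFrom q (y ++ z)) :
    ∃ ty, IsRun A.trans q y ty q := by
  obtain ⟨r, hr, ts, hts⟩ := hyz
  obtain ⟨ty, tz, q', -, hty, htz⟩ := hts.exists_split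
  obtain rfl := hloop q q' hq ⟨r, hr, ts, hts⟩ ⟨ty, hty⟩ ⟨r, hr, tz, htz⟩
  exact ⟨ty, hty⟩

theorem eq_replicate_of_isRun_pow (hA : A.FinitelyAmbiguous) (hloop : A.LoopsOn x y z)
    (hR : A.DeadStatesAgree x y z)
    (hq : q ∈ A.reach A.init x) (hyz : A.AccFrom q (y ++ z)) {ty : List (Q × σ × Q)}
    (hty : IsRun A.trans q y ty q) (m : ℕ) {T : List (Q × σ × Q)} {q' : Q}
    (hT : IsRun A.trans q (List.replicate m y).flatten T q') (hz : A.AccFrom q' z) :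
    q' = q ∧ T = (List.replicate m ty).flatten := by
  induction m generalizing T q' with
  | zero =>
    obtain ⟨rfl, rfl⟩ := (by simpa using hT : IsRun A.trans q [] T q').eq_nil
    simp
  | succ m ih =>
    rw [List.replicate_succ, List.flatten_cons] at hT
    obtain ⟨t, T', q₁, rfl, ht, hT'⟩ := hT.exists_split
    obtain ⟨r, hr, tz, htz⟩ := hz
    have hq₁z : A.AccFrom q₁ z :=
      accFrom_of_accFrom_pow hR m (mem_reach_append hq ht) ⟨r, hr, T' ++ tz, hT'.append htz⟩
    obtain rfl := hloop q q₁ hq hyz ⟨t, ht⟩ hq₁z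
    obtain ⟨tx, htx⟩ := hq
    obtain ⟨r₁, hr₁, tz₁, htz₁⟩ := hq₁z
    obtain rfl := hA.loop_unique htx ht hty htz₁ hr₁
    obtain ⟨rfl, rfl⟩ := ih hT' ⟨r, hr, tz, htz⟩
    simp [List.replicate_succ]

theorem image_pump_loopingRuns (hA : A.FinitelyAmbiguous) (hloop : A.LoopsOn x y z)
    (hR : A.DeadStatesAgree x y z) (j : ℕ) :
    pump j '' loopingRuns A x y z =
      {ts | A.AccRun (x ++ (List.replicate j y).flatten ++ z) ts} := by
  refine Set.Subset.antisymm (Set.image_subset_iff.2 fun t ht => pump_accRun ht j) ?_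
  rintro ts ⟨r, hr, h⟩
  obtain ⟨txT, tz, q', rfl, htxT, htz⟩ := h.exists_split
  obtain ⟨tx, T, q, rfl, htx, hT⟩ := htxT.exists_split
  have hq : q ∈ A.reach A.init x := ⟨tx, htx⟩
  have hyz := accFrom_append_of_accFrom_pow hR j hq ⟨r, hr, T ++ tz, hT.append htz⟩
  obtain ⟨ty, hty⟩ := exists_loop hloop hq hyz
  obtain ⟨rfl, rfl⟩ :=
    eq_replicate_of_isRun_pow hA hloop hR hq hyz hty j hT ⟨r, hr, tz, htz⟩
  exact ⟨(tx, ty, tz), ⟨_, r, hr, htx, hty, htz⟩, rfl⟩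

theorem encard_accRun_pow (hA : A.FinitelyAmbiguous) (hloop : A.LoopsOn x y z)
    (hR : A.DeadStatesAgree x y z) (j : ℕ) :
    {ts | A.AccRun (x ++ (List.replicate j y).flatten ++ z) ts}.encard =
      (loopingRuns A x y z).encard := by
  rw [← image_pump_loopingRuns hA hloop hR, (injOn_pump hA j).encard_image]

end NFA'

open NFA'

theorem stmt14_general {σ Q : Type} (A : NFA' σ Q) (hfa : A.FinitelyAmbiguous)
    (S : Finset (Q × σ × Q)) (hS : S ⊆ A.trans)
    (x y z : List σ) (M : ℕ)
    (hM : {ts | (A.restrict S).AccRun (x ++ y ++ z) ts}.encard = (M : ℕ∞))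
    (Q' R : Set Q)
    -- (1)
    (hQ' : Q' = {q | q ∈ (A.restrict S).reach A.init x ∧
      (A.restrict S).AccFrom q (y ++ z)})
    (hloop : ∀ ts, (A.restrict S).AccRun (x ++ y ++ z) ts →
      stateAt A.init ts x.length ∈ Q' →
      stateAt A.init ts (x.length + y.length) = stateAt A.init ts x.length)
    -- (2)
    (hR1 : R = {q | q ∈ (A.restrict S).reach A.init x ∧
      ¬ (A.restrict S).AccFrom q (y ++ z)})
    (hR2 : R = {q | q ∈ (A.restrict S).reach A.init (x ++ y) ∧
      ¬ (A.restrict S).AccFrom q z}) :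
    ∀ j : ℕ,
      {ts | (A.restrict S).AccRun (x ++ (List.replicate j y).flatten ++ z) ts}.encard
        = (M : ℕ∞) := by
  subst hQ'
  have hA := hfa.restrict hS
  have hloopsOn := loopsOn_of_stateAt hloop
  have hR : (A.restrict S).DeadStatesAgree x y z := fun q =>
    Set.ext_iff.1 (hR1.symm.trans hR2) q
  intro j
  rw [encard_accRun_pow hA hloopsOn hR, ← hM, ← encard_accRun_pow hA hloopsOn hR 1]
  simp

/-- Pumping the loop word `y` preserves the number of accepting runs. -/
theorem stmt14 {σ Q : Type} (A : NFA' σ Q) (hfa : A.FinitelyAmbiguous)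
    (S : Finset (Q × σ × Q)) (hS : S ⊆ A.trans)
    (x y z : List σ) (hy : y ≠ []) (M : ℕ)
    (hw : x ++ y ++ z ∈ (A.restrict S).lang)
    (hM : {ts | (A.restrict S).AccRun (x ++ y ++ z) ts}.encard = (M : ℕ∞))
    (Q' R : Set Q)
    -- (1)
    (hQ' : Q' = {q | q ∈ (A.restrict S).reach A.init x ∧
      (A.restrict S).AccFrom q (y ++ z)})
    (hloop : ∀ ts, (A.restrict S).AccRun (x ++ y ++ z) ts →
      stateAt A.init ts x.length ∈ Q' →
      stateAt A.init ts (x.length + y.length) = stateAt A.init ts x.length)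
    -- (2)
    (hR1 : R = {q | q ∈ (A.restrict S).reach A.init x ∧
      ¬ (A.restrict S).AccFrom q (y ++ z)})
    (hR2 : R = {q | q ∈ (A.restrict S).reach A.init (x ++ y) ∧
      ¬ (A.restrict S).AccFrom q z}) :
    ∀ j : ℕ,
      {ts | (A.restrict S).AccRun (x ++ (List.replicate j y).flatten ++ z) ts}.encard
        = (M : ℕ∞) :=
  stmt14_general A hfa S hS x y z M hM Q' R hQ' hloop hR1 hR2
end
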